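/- With G ⊆ C⁺(ℓ) as above (ℓ odd, G not contained in any Cartan subgroup, image in PGL₂(F_ℓ) containing an element of order ≥ 5), the F_ℓ-span of the set {gBg⁻¹ − B : g ∈ G, B ∈ gl₂(F_ℓ)} equals sl₂(F_ℓ). -/

import Mathlib

open Matrix

/-- The unit group `S^×` of a subring `S` of a matrix ring, viewed as the
subgroup of `GL` consisting of the invertible matrices `g` with both `g` and
`g⁻¹` in `S`. -/
def unitsOf {n : Type*} [DecidableEq n] [Fintype n] {A : Type*} [CommRing A]
    (S : Subring (Matrix n n A)) : Subgroup (GL n A) where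
  carrier := {g | ((g : GL n A) : Matrix n n A) ∈ S ∧
    ((g⁻¹ : GL n A) : Matrix n n A) ∈ S}
  one_mem' := ⟨S.one_mem, by simpa using S.one_mem⟩
  mul_mem' := by
    rintro a b ⟨ha1, ha2⟩ ⟨hb1, hb2⟩
    refine ⟨by simpa using S.mul_mem ha1 hb1, ?_⟩
    simpa [_root_.mul_inv_rev] using S.mul_mem hb2 ha2
  inv_mem' := by
    rintro a ⟨h1, h2⟩
    exact ⟨h2, by simpa using h1⟩

/-- A submodule `V` of `M₂(F_ℓ)` is stable under the conjugation action of the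
subgroup `G` of `GL₂(F_ℓ)`. -/
def ConjStable (ℓ : ℕ) [Fact (Nat.Prime ℓ)] (G : Subgroup (GL (Fin 2) (ZMod ℓ)))
    (V : Submodule (ZMod ℓ) (Matrix (Fin 2) (Fin 2) (ZMod ℓ))) : Prop :=
  ∀ g ∈ G, ∀ v ∈ V,
    ((g : GL (Fin 2) (ZMod ℓ)) : Matrix (Fin 2) (Fin 2) (ZMod ℓ)) * v *
      ((g⁻¹ : GL (Fin 2) (ZMod ℓ)) : Matrix (Fin 2) (Fin 2) (ZMod ℓ)) ∈ V

/-- Two conjugation-stable submodules of `M₂(F_ℓ)` are isomorphic as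
`F_ℓ[G]`-modules: there is a linear equivalence intertwining the conjugation
action of `G`. -/
def ConjIso (ℓ : ℕ) [Fact (Nat.Prime ℓ)] (G : Subgroup (GL (Fin 2) (ZMod ℓ)))
    (V W : Submodule (ZMod ℓ) (Matrix (Fin 2) (Fin 2) (ZMod ℓ))) : Prop :=
  ∃ e : V ≃ₗ[ZMod ℓ] W, ∀ g ∈ G, ∀ v w : V,
    ((g : GL (Fin 2) (ZMod ℓ)) : Matrix (Fin 2) (Fin 2) (ZMod ℓ)) * (v : Matrix (Fin 2) (Fin 2) (ZMod ℓ)) *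
        ((g⁻¹ : GL (Fin 2) (ZMod ℓ)) : Matrix (Fin 2) (Fin 2) (ZMod ℓ)) = (w : Matrix (Fin 2) (Fin 2) (ZMod ℓ)) →
    ((g : GL (Fin 2) (ZMod ℓ)) : Matrix (Fin 2) (Fin 2) (ZMod ℓ)) * (e v : Matrix (Fin 2) (Fin 2) (ZMod ℓ)) *
        ((g⁻¹ : GL (Fin 2) (ZMod ℓ)) : Matrix (Fin 2) (Fin 2) (ZMod ℓ)) = (e w : Matrix (Fin 2) (Fin 2) (ZMod ℓ))

section Aux
variable {K : Type*} [Field K]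

lemma adj2 (x : Matrix (Fin 2) (Fin 2) K) :
    Matrix.trace x • (1 : Matrix (Fin 2) (Fin 2) K) - x = adjugate x := by
  rw [Matrix.adjugate_fin_two]
  ext i j
  fin_cases i <;> fin_cases j <;>
    simp [Matrix.trace_fin_two, Matrix.one_apply] <;> ring

lemma ch2 (x : Matrix (Fin 2) (Fin 2) K) :
    x * x = Matrix.trace x • x - x.det • 1 := by
  have := Matrix.mul_adjugate x
  rw [← adj2] at this
  rw [mul_sub, mul_smul_comm, mul_one] at this
  linear_combination (norm := abel) -this


lemma comm_mem_span (r y : Matrix (Fin 2) (Fin 2) K)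
    (hδ : (Matrix.trace r)^2 - 4 * r.det ≠ 0) (hc : r * y = y * r) :
    ∃ a b : K, y = a • 1 + b • r := by
  have hδ' : (r 0 0 - r 1 1)^2 + 4 * (r 0 1 * r 1 0) ≠ 0 := by
    intro h; apply hδ; rw [Matrix.trace_fin_two, Matrix.det_fin_two]
    linear_combination h
  have e00 : r 0 1 * y 1 0 - r 1 0 * y 0 1 = 0 := by
    have := congrFun (congrFun hc 0) 0
    simp [Matrix.mul_apply, Fin.sum_univ_two] at this
    linear_combination this
  have e01 : y 0 1 * (r 0 0 - r 1 1) - r 0 1 * (y 0 0 - y 1 1) = 0 := by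
    have := congrFun (congrFun hc 0) 1
    simp [Matrix.mul_apply, Fin.sum_univ_two] at this
    linear_combination this
  have e10 : r 1 0 * (y 0 0 - y 1 1) - y 1 0 * (r 0 0 - r 1 1) = 0 := by
    have := congrFun (congrFun hc 1) 0
    simp [Matrix.mul_apply, Fin.sum_univ_two] at this
    linear_combination this
  by_cases hq0 : r 0 1 ≠ 0
  · refine ⟨y 0 0 - (y 0 1 / r 0 1) * r 0 0, y 0 1 / r 0 1, ?_⟩
    ext i j
    fin_cases i <;> fin_cases j <;> simp [Matrix.one_apply] <;> field_simp <;>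
      first
        | ring1
        | linear_combination e00
        | linear_combination -e00
        | linear_combination e01
        | linear_combination -e01
        | linear_combination e01 - e00
        | linear_combination e00 - e01
  · push_neg at hq0
    by_cases hs0 : r 1 0 ≠ 0
    · refine ⟨y 0 0 - (y 1 0 / r 1 0) * r 0 0, y 1 0 / r 1 0, ?_⟩
      ext i j
      fin_cases i <;> fin_cases j <;> simp [Matrix.one_apply] <;> field_simp <;>
        first
          | ring1
          | linear_combination e00
          | linear_combination -e00
          | linear_combination e10
          | linear_combination -e10
          | linear_combination e10 - e00
          | linear_combination e00 - e10
          | linear_combination e10 + e00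
          | linear_combination -e10 - e00
    · push_neg at hs0
      have hpw : r 0 0 - r 1 1 ≠ 0 := by
        intro h; apply hδ'; rw [h, hq0]; ring
      have hb : y 0 1 = 0 := by
        have h2 : y 0 1 * (r 0 0 - r 1 1) = 0 := by rw [hq0] at e01; linear_combination e01
        rcases mul_eq_zero.mp h2 with h | h
        · exact h
        · exact absurd h hpw
      have hcc : y 1 0 = 0 := by
        have h2 : y 1 0 * (r 0 0 - r 1 1) = 0 := by rw [hs0] at e10; linear_combination -e10
        rcases mul_eq_zero.mp h2 with h | h
        · exact h
        · exact absurd h hpw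
      refine ⟨y 0 0 - ((y 0 0 - y 1 1) / (r 0 0 - r 1 1)) * r 0 0,
        (y 0 0 - y 1 1) / (r 0 0 - r 1 1), ?_⟩
      ext i j
      fin_cases i <;> fin_cases j <;>
        simp [Matrix.one_apply, hb, hcc, hq0, hs0] <;> field_simp <;> ring

lemma inv_val_mem (R : Subalgebra K (Matrix (Fin 2) (Fin 2) K)) (U : GL (Fin 2) K)
    (hU : (U : Matrix (Fin 2) (Fin 2) K) ∈ R) :
    ((U⁻¹ : GL (Fin 2) K) : Matrix (Fin 2) (Fin 2) K) ∈ R := by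
  set x : Matrix (Fin 2) (Fin 2) K := (U : Matrix (Fin 2) (Fin 2) K) with hx
  have hdet : IsUnit x.det := (Matrix.isUnit_iff_isUnit_det x).mp ⟨U, rfl⟩
  have hdet' : x.det ≠ 0 := by
    intro h; rw [h] at hdet; exact (not_isUnit_zero hdet)
  set y : Matrix (Fin 2) (Fin 2) K := (x.det)⁻¹ • (Matrix.trace x • 1 - x) with hy
  have hxy : x * y = 1 := by
    rw [hy, Matrix.mul_smul, adj2, Matrix.mul_adjugate, smul_smul,
      inv_mul_cancel₀ hdet', one_smul]
  have : ((U⁻¹ : GL (Fin 2) K) : Matrix (Fin 2) (Fin 2) K) = y := by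
    calc ((U⁻¹ : GL (Fin 2) K) : Matrix (Fin 2) (Fin 2) K)
        = ((U⁻¹ : GL (Fin 2) K) : Matrix (Fin 2) (Fin 2) K) * (x * y) := by rw [hxy, mul_one]
      _ = (((U⁻¹ : GL (Fin 2) K) : Matrix (Fin 2) (Fin 2) K) * x) * y := by rw [mul_assoc]
      _ = y := by
          rw [hx, ← Units.val_mul, inv_mul_cancel U, Units.val_one, one_mul]
  rw [this, hy]
  exact R.smul_mem (R.sub_mem (R.smul_mem R.one_mem _) hU) _

lemma mem_unitsOf (R : Subalgebra K (Matrix (Fin 2) (Fin 2) K)) (U : GL (Fin 2) K)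
    (hU : (U : Matrix (Fin 2) (Fin 2) K) ∈ R) : U ∈ unitsOf R.toSubring :=
  ⟨hU, inv_val_mem R U hU⟩

/-- Any matrix in `R` can be written as (unit in `R`) + scalar, provided `2 ≠ 0`. -/
lemma exists_unit_shift (h2 : (2 : K) ≠ 0) (x : Matrix (Fin 2) (Fin 2) K) :
    ∃ a : K, ((x - a • 1 : Matrix (Fin 2) (Fin 2) K)).det ≠ 0 := by
  have hdet : ∀ a : K, (x - a • 1 : Matrix (Fin 2) (Fin 2) K).det
      = a^2 - Matrix.trace x * a + x.det := by
    intro a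
    rw [Matrix.det_fin_two, Matrix.trace_fin_two, Matrix.det_fin_two]
    simp [Matrix.one_apply]
    ring
  by_contra hcon
  push_neg at hcon
  have h0 := hcon 0
  have h1 := hcon 1
  have hm1 := hcon (-1)
  rw [hdet] at h0 h1 hm1
  apply h2
  linear_combination h1 + hm1 - 2 * h0

lemma conj_mem (h2 : (2 : K) ≠ 0) (R : Subalgebra K (Matrix (Fin 2) (Fin 2) K))
    (g : GL (Fin 2) K) (hg : g ∈ Subgroup.normalizer ((unitsOf R.toSubring : Subgroup (GL (Fin 2) K)) : Set (GL (Fin 2) K)))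
    (x : Matrix (Fin 2) (Fin 2) K) (hx : x ∈ R) :
    (g : Matrix (Fin 2) (Fin 2) K) * x * ((g⁻¹ : GL (Fin 2) K) : Matrix (Fin 2) (Fin 2) K) ∈ R := by
  obtain ⟨a, ha⟩ := exists_unit_shift h2 x
  set u : Matrix (Fin 2) (Fin 2) K := x - a • 1 with hu
  have hudet : IsUnit u := (Matrix.isUnit_iff_isUnit_det u).mpr (Ne.isUnit ha)
  obtain ⟨U, hU⟩ := hudet
  have hUmem : U ∈ unitsOf R.toSubring :=
    mem_unitsOf R U (by rw [hU]; exact R.sub_mem hx (R.smul_mem R.one_mem _))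
  have hconj : g * U * g⁻¹ ∈ unitsOf R.toSubring :=
    ((Subgroup.mem_normalizer_iff.mp hg) U).mp hUmem
  have hval : ((g * U * g⁻¹ : GL (Fin 2) K) : Matrix (Fin 2) (Fin 2) K)
      = (g : Matrix (Fin 2) (Fin 2) K) * u * ((g⁻¹ : GL (Fin 2) K) : Matrix (Fin 2) (Fin 2) K) := by
    rw [Units.val_mul, Units.val_mul, hU]
  have h1 : (g : Matrix (Fin 2) (Fin 2) K) * u * ((g⁻¹ : GL (Fin 2) K) : Matrix (Fin 2) (Fin 2) K) ∈ R := by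
    rw [← hval]; exact hconj.1
  have hgg : (g : Matrix (Fin 2) (Fin 2) K) * ((g⁻¹ : GL (Fin 2) K) : Matrix (Fin 2) (Fin 2) K) = 1 := by
    rw [← Units.val_mul, mul_inv_cancel g, Units.val_one]
  have : (g : Matrix (Fin 2) (Fin 2) K) * x * ((g⁻¹ : GL (Fin 2) K) : Matrix (Fin 2) (Fin 2) K)
      = (g : Matrix (Fin 2) (Fin 2) K) * u * ((g⁻¹ : GL (Fin 2) K) : Matrix (Fin 2) (Fin 2) K) + a • 1 := by
    rw [hu]
    have : (g : Matrix (Fin 2) (Fin 2) K) * (a • (1 : Matrix (Fin 2) (Fin 2) K)) *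
        ((g⁻¹ : GL (Fin 2) K) : Matrix (Fin 2) (Fin 2) K) = a • 1 := by
      rw [Matrix.mul_smul, Matrix.smul_mul, mul_one, hgg]
    rw [mul_sub, sub_mul, this]
    abel
  rw [this]
  exact R.add_mem h1 (R.smul_mem R.one_mem _)

lemma conj_trace (u : GL (Fin 2) K) (B : Matrix (Fin 2) (Fin 2) K) :
    Matrix.trace ((u : Matrix (Fin 2) (Fin 2) K) * B * ((u⁻¹ : GL (Fin 2) K) : Matrix (Fin 2) (Fin 2) K))
      = Matrix.trace B := by
  rw [Matrix.trace_mul_comm, ← mul_assoc, ← Units.val_mul, inv_mul_cancel u, Units.val_one, one_mul]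

lemma conj_det (u : GL (Fin 2) K) (B : Matrix (Fin 2) (Fin 2) K) :
    ((u : Matrix (Fin 2) (Fin 2) K) * B * ((u⁻¹ : GL (Fin 2) K) : Matrix (Fin 2) (Fin 2) K)).det
      = B.det := by
  have h1 : ((u : Matrix (Fin 2) (Fin 2) K) * ((u⁻¹ : GL (Fin 2) K) : Matrix (Fin 2) (Fin 2) K)).det = 1 := by
    rw [← Units.val_mul, mul_inv_cancel u, Units.val_one, Matrix.det_one]
  rw [Matrix.det_mul, Matrix.det_mul]
  rw [Matrix.det_mul] at h1
  calc (u : Matrix (Fin 2) (Fin 2) K).det * B.det * ((u⁻¹ : GL (Fin 2) K) : Matrix (Fin 2) (Fin 2) K).det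
      = B.det * ((u : Matrix (Fin 2) (Fin 2) K).det * ((u⁻¹ : GL (Fin 2) K) : Matrix (Fin 2) (Fin 2) K).det) := by ring
    _ = B.det := by rw [h1, mul_one]

lemma scalar_mem_center (u : GL (Fin 2) K) (c : K)
    (h : (u : Matrix (Fin 2) (Fin 2) K) = c • 1) :
    u ∈ Subgroup.center (GL (Fin 2) K) := by
  rw [Subgroup.mem_center_iff]
  intro b
  ext
  rw [Units.val_mul, Units.val_mul, h]
  rw [Matrix.smul_mul, Matrix.mul_smul, one_mul, mul_one]

lemma delta_ne (h2 : (2 : K) ≠ 0) (R : Subalgebra K (Matrix (Fin 2) (Fin 2) K))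
    (hetale : ∀ x ∈ R, x * x = 0 → x = 0)
    (r : Matrix (Fin 2) (Fin 2) K) (hrR : r ∈ R) (hrns : ∀ c : K, r ≠ c • 1) :
    (Matrix.trace r)^2 - 4 * r.det ≠ 0 := by
  intro hδ
  set s : Matrix (Fin 2) (Fin 2) K := (2 : K) • r - Matrix.trace r • 1 with hs
  have hsR : s ∈ R := R.sub_mem (R.smul_mem hrR _) (R.smul_mem R.one_mem _)
  have hss : s * s = ((Matrix.trace r)^2 - 4 * r.det) • 1 := by
    rw [hs, sub_mul, mul_sub, mul_sub]
    simp only [Matrix.smul_mul, Matrix.mul_smul, one_mul, mul_one, smul_smul]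
    rw [ch2 r]
    match_scalars <;> ring
  rw [hδ, zero_smul] at hss
  have := hetale s hsR hss
  apply hrns ((Matrix.trace r) / 2)
  have h4 : (2 : K) • r = Matrix.trace r • 1 := by
    have := sub_eq_zero.mp (hs ▸ this)
    exact this
  have : r = ((2:K)⁻¹ * Matrix.trace r) • 1 := by
    rw [mul_smul, ← h4, smul_smul, inv_mul_cancel₀ h2, one_smul]
  rw [this]
  congr 1
  field_simp
  simp only [Matrix.trace_fin_two, Matrix.smul_apply, Matrix.one_apply_eq, smul_eq_mul, mul_one]
  rw [← add_div, ← two_mul, mul_div_cancel_left₀ _ h2]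

lemma expand_sq (x : Matrix (Fin 2) (Fin 2) K) (a b : K) :
    (a • 1 + b • x) * (a • 1 + b • x)
      = (a*a) • 1 + (2*a*b) • x + (b*b) • (x*x) := by
  rw [add_mul, mul_add, mul_add]
  simp only [Matrix.smul_mul, Matrix.mul_smul, one_mul, mul_one, smul_smul]
  match_scalars <;> ring

lemma val_mul_inv (u : GL (Fin 2) K) :
    (u : Matrix (Fin 2) (Fin 2) K) * ((u⁻¹ : GL (Fin 2) K) : Matrix (Fin 2) (Fin 2) K) = 1 := by
  rw [← Units.val_mul, mul_inv_cancel u, Units.val_one]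

lemma val_inv_mul (u : GL (Fin 2) K) :
    ((u⁻¹ : GL (Fin 2) K) : Matrix (Fin 2) (Fin 2) K) * (u : Matrix (Fin 2) (Fin 2) K) = 1 := by
  rw [← Units.val_mul, inv_mul_cancel u, Units.val_one]

lemma conj_eq_of_commute (u : GL (Fin 2) K) (B : Matrix (Fin 2) (Fin 2) K)
    (h : (u : Matrix (Fin 2) (Fin 2) K) * B = B * u) :
    (u : Matrix (Fin 2) (Fin 2) K) * B * ((u⁻¹ : GL (Fin 2) K) : Matrix (Fin 2) (Fin 2) K) = B := by
  rw [h, mul_assoc, val_mul_inv, mul_one]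

lemma commute_of_conj_eq (u : GL (Fin 2) K) (B : Matrix (Fin 2) (Fin 2) K)
    (h : (u : Matrix (Fin 2) (Fin 2) K) * B * ((u⁻¹ : GL (Fin 2) K) : Matrix (Fin 2) (Fin 2) K) = B) :
    (u : Matrix (Fin 2) (Fin 2) K) * B = B * u := by
  have h2 : ((u : Matrix (Fin 2) (Fin 2) K) * B * ((u⁻¹ : GL (Fin 2) K) : Matrix (Fin 2) (Fin 2) K))
      * (u : Matrix (Fin 2) (Fin 2) K) = B * u := by rw [h]
  rwa [mul_assoc ((u : Matrix (Fin 2) (Fin 2) K) * B), val_inv_mul, mul_one] at h2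

/-- The linear map `B ↦ uBu⁻¹ - B`. -/
def conjSub (u : GL (Fin 2) K) :
    Matrix (Fin 2) (Fin 2) K →ₗ[K] Matrix (Fin 2) (Fin 2) K where
  toFun B := (u : Matrix (Fin 2) (Fin 2) K) * B * ((u⁻¹ : GL (Fin 2) K) : Matrix (Fin 2) (Fin 2) K) - B
  map_add' B C := by
    simp only [mul_add, add_mul]
    abel
  map_smul' c B := by
    simp only [Matrix.mul_smul, Matrix.smul_mul, smul_sub, RingHom.id_apply]

@[simp] lemma conjSub_apply (u : GL (Fin 2) K) (B : Matrix (Fin 2) (Fin 2) K) :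
    conjSub u B = (u : Matrix (Fin 2) (Fin 2) K) * B * ((u⁻¹ : GL (Fin 2) K) : Matrix (Fin 2) (Fin 2) K) - B := rfl

theorem aux_main (h2 : (2 : K) ≠ 0)
    (R : Subalgebra K (Matrix (Fin 2) (Fin 2) K))
    (hcomm : ∀ x ∈ R, ∀ y ∈ R, x * y = y * x)
    (hrank : Module.finrank K R = 2)
    (hetale : ∀ x ∈ R, x * x = 0 → x = 0)
    (G : Subgroup (GL (Fin 2) K))
    (hGnorm : G ≤ Subgroup.normalizer ((unitsOf R.toSubring : Subgroup (GL (Fin 2) K)) : Set (GL (Fin 2) K)))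
    (hGle : ¬ G ≤ unitsOf R.toSubring)
    (hord : ∃ g ∈ G, 5 ≤ orderOf
      (QuotientGroup.mk (s := Subgroup.center (GL (Fin 2) K)) g)) :
    Submodule.span K
        {X : Matrix (Fin 2) (Fin 2) K | ∃ g ∈ G,
          ∃ B : Matrix (Fin 2) (Fin 2) K,
            X = ((g : GL (Fin 2) K) : Matrix (Fin 2) (Fin 2) K) * B *
                ((g⁻¹ : GL (Fin 2) K) : Matrix (Fin 2) (Fin 2) K) - B}
      = LinearMap.ker (Matrix.traceLinearMap (Fin 2) K K) := by
  classical
  obtain ⟨g, hgG, hgord⟩ := hord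
  obtain ⟨h, hhG, hh⟩ : ∃ h ∈ G, h ∉ unitsOf R.toSubring := by
    by_contra hcon
    push_neg at hcon
    exact hGle fun x hx => hcon x hx
  -- a nonscalar element of R
  obtain ⟨r, hrR, hrns⟩ : ∃ r ∈ R, ∀ c : K, r ≠ c • 1 := by
    by_contra hcon
    push_neg at hcon
    have hle : Subalgebra.toSubmodule R ≤
        Submodule.span K {(1 : Matrix (Fin 2) (Fin 2) K)} := by
      intro x hx
      obtain ⟨c, hc⟩ := hcon x hx
      rw [hc]
      exact Submodule.smul_mem _ _ (Submodule.mem_span_singleton_self _)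
    have hmono := Submodule.finrank_mono hle
    have h1 : Module.finrank K (Submodule.span K {(1 : Matrix (Fin 2) (Fin 2) K)}) = 1 :=
      finrank_span_singleton one_ne_zero
    have h2' : Module.finrank K (Subalgebra.toSubmodule R) = 2 := hrank
    omega
  have hδr := delta_ne h2 R hetale r hrR hrns
  -- linear independence of 1 and r
  have hindep : ∀ α β : K, α • (1 : Matrix (Fin 2) (Fin 2) K) + β • r = 0 → α = 0 ∧ β = 0 := by
    intro α β hab
    by_cases hβ : β = 0
    · subst hβ
      rw [zero_smul, add_zero] at hab
      rcases smul_eq_zero.mp hab with hc | hc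
      · exact ⟨hc, rfl⟩
      · exact absurd hc one_ne_zero
    · exfalso
      apply hrns (-(β⁻¹ * α))
      have h3 : β • r = -(α • (1 : Matrix (Fin 2) (Fin 2) K)) := by
        rw [eq_neg_iff_add_eq_zero, add_comm]; exact hab
      calc r = β⁻¹ • (β • r) := by rw [smul_smul, inv_mul_cancel₀ hβ, one_smul]
        _ = -(β⁻¹ * α) • 1 := by rw [h3, smul_neg, smul_smul, neg_smul]
  have hhR : (h : Matrix (Fin 2) (Fin 2) K) ∉ R := fun hmem => hh (mem_unitsOf R h hmem)
  -- h does not commute with r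
  have hry : (h : Matrix (Fin 2) (Fin 2) K) * r *
      ((h⁻¹ : GL (Fin 2) K) : Matrix (Fin 2) (Fin 2) K) ≠ r := by
    intro heq
    obtain ⟨a, b, hab⟩ := comm_mem_span r h hδr (commute_of_conj_eq h r heq).symm
    exact hhR (hab ▸ R.add_mem (R.smul_mem R.one_mem a) (R.smul_mem hrR b))
  set y : Matrix (Fin 2) (Fin 2) K :=
    (h : Matrix (Fin 2) (Fin 2) K) * r * ((h⁻¹ : GL (Fin 2) K) : Matrix (Fin 2) (Fin 2) K) - r
    with hydef
  have hyR : y ∈ R := R.sub_mem (conj_mem h2 R h (hGnorm hhG) r hrR) hrR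
  have hyne : y ≠ 0 := sub_ne_zero.mpr hry
  have hytr : Matrix.trace y = 0 := by
    rw [hydef, Matrix.trace_sub, conj_trace, sub_self]
  -- the order ≥ 5 element lies in R
  have hgvR : (g : Matrix (Fin 2) (Fin 2) K) ∈ R := by
    by_contra hgR
    set z : Matrix (Fin 2) (Fin 2) K :=
      (g : Matrix (Fin 2) (Fin 2) K) * r * ((g⁻¹ : GL (Fin 2) K) : Matrix (Fin 2) (Fin 2) K)
      with hzdef
    have hzR : z ∈ R := conj_mem h2 R g (hGnorm hgG) r hrR
    have hztr : Matrix.trace z = Matrix.trace r := conj_trace g r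
    have hzdet : z.det = r.det := conj_det g r
    have hunconj : ((g⁻¹ : GL (Fin 2) K) : Matrix (Fin 2) (Fin 2) K) * z *
        (g : Matrix (Fin 2) (Fin 2) K) = r := by
      rw [hzdef]
      have e : ((g⁻¹ : GL (Fin 2) K) : Matrix (Fin 2) (Fin 2) K) *
          ((g : Matrix (Fin 2) (Fin 2) K) * r * ((g⁻¹ : GL (Fin 2) K) : Matrix (Fin 2) (Fin 2) K)) *
          (g : Matrix (Fin 2) (Fin 2) K)
          = (((g⁻¹ : GL (Fin 2) K) : Matrix (Fin 2) (Fin 2) K) * (g : Matrix (Fin 2) (Fin 2) K)) * r *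
            (((g⁻¹ : GL (Fin 2) K) : Matrix (Fin 2) (Fin 2) K) * (g : Matrix (Fin 2) (Fin 2) K)) := by
        simp only [mul_assoc]
      rw [e, val_inv_mul, one_mul, mul_one]
    have hzns : ∀ c : K, z ≠ c • 1 := by
      intro c hzc
      apply hrns c
      rw [← hunconj, hzc, Matrix.mul_smul, Matrix.smul_mul, mul_one, val_inv_mul]
    obtain ⟨a, b, hzab⟩ := comm_mem_span r z hδr (hcomm r hrR z hzR)
    have hch : z * z = Matrix.trace r • z - r.det • 1 := by
      rw [ch2 z, hztr, hzdet]
    have key : (a*a + b*b*(-r.det)) • (1 : Matrix (Fin 2) (Fin 2) K)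
        + (2*a*b + b*b*Matrix.trace r) • r
        = (Matrix.trace r * a - r.det) • 1 + (Matrix.trace r * b) • r := by
      have e1 : (a • (1 : Matrix (Fin 2) (Fin 2) K) + b • r) * (a • 1 + b • r)
          = Matrix.trace r • (a • (1 : Matrix (Fin 2) (Fin 2) K) + b • r) - r.det • 1 := by
        rw [← hzab, hch]
      rw [expand_sq, ch2 r] at e1
      calc (a*a + b*b*(-r.det)) • (1 : Matrix (Fin 2) (Fin 2) K)
            + (2*a*b + b*b*Matrix.trace r) • r
          = (a*a) • (1 : Matrix (Fin 2) (Fin 2) K) + (2*a*b) • r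
            + (b*b) • (Matrix.trace r • r - r.det • 1) := by match_scalars <;> ring
        _ = Matrix.trace r • (a • (1 : Matrix (Fin 2) (Fin 2) K) + b • r) - r.det • 1 := e1
        _ = (Matrix.trace r * a - r.det) • 1 + (Matrix.trace r * b) • r := by
            match_scalars <;> ring
    have hcoef : (a*a + b*b*(-r.det) - (Matrix.trace r * a - r.det)) = 0 ∧
        (2*a*b + b*b*Matrix.trace r - Matrix.trace r * b) = 0 := by
      apply hindep
      have e2 : (a*a + b*b*(-r.det) - (Matrix.trace r * a - r.det)) • (1 : Matrix (Fin 2) (Fin 2) K)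
          + (2*a*b + b*b*Matrix.trace r - Matrix.trace r * b) • r
          = ((a*a + b*b*(-r.det)) • (1 : Matrix (Fin 2) (Fin 2) K)
            + (2*a*b + b*b*Matrix.trace r) • r)
            - ((Matrix.trace r * a - r.det) • 1 + (Matrix.trace r * b) • r) := by
        match_scalars <;> ring
      rw [e2, key, sub_self]
    obtain ⟨hA, hB⟩ := hcoef
    have hbne : b ≠ 0 := by
      intro hb0
      apply hzns a
      rw [hzab, hb0, zero_smul, add_zero]
    have h2a : 2*a = Matrix.trace r * (1 - b) := by
      have e3 : b * (2*a + Matrix.trace r * (b - 1)) = 0 := by linear_combination hB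
      rcases mul_eq_zero.mp e3 with hc | hc
      · exact absurd hc hbne
      · linear_combination hc
    have hb2 : (b*b - 1) * ((Matrix.trace r)^2 - 4*r.det) = 0 := by
      linear_combination 4*hA - (2*a - Matrix.trace r - b*Matrix.trace r) * h2a
    rcases mul_eq_zero.mp hb2 with hc | hc
    swap
    · exact absurd hc hδr
    have hc' : (b - 1) * (b + 1) = 0 := by linear_combination hc
    rcases mul_eq_zero.mp hc' with hb1 | hb1
    · -- b = 1 : g commutes with r, so g ∈ R, contradiction
      have hbv : b = 1 := by linear_combination hb1
      have hav : a = 0 := by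
        have e4 : 2 * a = 0 := by rw [hbv] at h2a; linear_combination h2a
        rcases mul_eq_zero.mp e4 with hc2 | hc2
        · exact absurd hc2 h2
        · exact hc2
      have hz_eq : (g : Matrix (Fin 2) (Fin 2) K) * r *
          ((g⁻¹ : GL (Fin 2) K) : Matrix (Fin 2) (Fin 2) K) = r := by
        rw [← hzdef, hzab, hav, hbv, zero_smul, zero_add, one_smul]
      obtain ⟨a', b', hg'⟩ := comm_mem_span r g hδr (commute_of_conj_eq g r hz_eq).symm
      exact hgR (hg' ▸ R.add_mem (R.smul_mem R.one_mem a') (R.smul_mem hrR b'))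
    · -- b = -1 : g² is scalar, contradicting the order hypothesis
      have hbv : b = -1 := by linear_combination hb1
      have hav : a = Matrix.trace r := by
        have e4 : 2 * (a - Matrix.trace r) = 0 := by rw [hbv] at h2a; linear_combination h2a
        rcases mul_eq_zero.mp e4 with hc2 | hc2
        · exact absurd hc2 h2
        · linear_combination hc2
      have hσ : (g : Matrix (Fin 2) (Fin 2) K) * r *
          ((g⁻¹ : GL (Fin 2) K) : Matrix (Fin 2) (Fin 2) K)
          = Matrix.trace r • 1 - r := by
        rw [← hzdef, hzab, hav, hbv]
        match_scalars <;> ring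
      have hsmul_conj : ∀ t : K, (g : Matrix (Fin 2) (Fin 2) K) *
          (t • (1 : Matrix (Fin 2) (Fin 2) K)) *
          ((g⁻¹ : GL (Fin 2) K) : Matrix (Fin 2) (Fin 2) K) = t • 1 := by
        intro t
        rw [Matrix.mul_smul, Matrix.smul_mul, mul_one, val_mul_inv]
      have hσ2 : (g : Matrix (Fin 2) (Fin 2) K) *
          ((g : Matrix (Fin 2) (Fin 2) K) * r * ((g⁻¹ : GL (Fin 2) K) : Matrix (Fin 2) (Fin 2) K)) *
          ((g⁻¹ : GL (Fin 2) K) : Matrix (Fin 2) (Fin 2) K) = r := by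
        rw [hσ, mul_sub, sub_mul, hsmul_conj, hσ]
        abel
      have huconj : ((g*g : GL (Fin 2) K) : Matrix (Fin 2) (Fin 2) K) * r *
          (((g*g)⁻¹ : GL (Fin 2) K) : Matrix (Fin 2) (Fin 2) K) = r := by
        rw [_root_.mul_inv_rev, Units.val_mul, Units.val_mul]
        have e5 := hσ2
        simp only [mul_assoc] at e5 ⊢
        exact e5
      have hkr := commute_of_conj_eq (g*g) r huconj
      obtain ⟨α, β, hkab⟩ := comm_mem_span r ((g*g : GL (Fin 2) K) : Matrix (Fin 2) (Fin 2) K)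
        hδr hkr.symm
      -- conjugating g² by g fixes it
      have hσk : (g : Matrix (Fin 2) (Fin 2) K) *
          ((g*g : GL (Fin 2) K) : Matrix (Fin 2) (Fin 2) K) *
          ((g⁻¹ : GL (Fin 2) K) : Matrix (Fin 2) (Fin 2) K)
          = ((g*g : GL (Fin 2) K) : Matrix (Fin 2) (Fin 2) K) := by
        rw [Units.val_mul]
        have e6 : (g : Matrix (Fin 2) (Fin 2) K) *
            ((g : Matrix (Fin 2) (Fin 2) K) * (g : Matrix (Fin 2) (Fin 2) K)) *
            ((g⁻¹ : GL (Fin 2) K) : Matrix (Fin 2) (Fin 2) K)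
            = (g : Matrix (Fin 2) (Fin 2) K) * (g : Matrix (Fin 2) (Fin 2) K) *
              ((g : Matrix (Fin 2) (Fin 2) K) * ((g⁻¹ : GL (Fin 2) K) : Matrix (Fin 2) (Fin 2) K)) := by
          simp only [mul_assoc]
        rw [e6, val_mul_inv, mul_one]
      have hσk2 : (g : Matrix (Fin 2) (Fin 2) K) *
          ((g*g : GL (Fin 2) K) : Matrix (Fin 2) (Fin 2) K) *
          ((g⁻¹ : GL (Fin 2) K) : Matrix (Fin 2) (Fin 2) K)
          = α • 1 + β • (Matrix.trace r • 1 - r) := by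
        rw [hkab, mul_add, add_mul, Matrix.mul_smul, Matrix.mul_smul, Matrix.smul_mul,
          Matrix.smul_mul, mul_one, val_mul_inv, hσ]
      have e7 : (β * Matrix.trace r) • (1 : Matrix (Fin 2) (Fin 2) K) + (-(2*β)) • r = 0 := by
        have e := hσk.symm.trans hσk2
        rw [hkab] at e
        calc (β * Matrix.trace r) • (1 : Matrix (Fin 2) (Fin 2) K) + (-(2*β)) • r
            = (α • 1 + β • (Matrix.trace r • 1 - r)) - (α • 1 + β • r) := by
              match_scalars <;> ring
          _ = 0 := by rw [← e, sub_self]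
      obtain ⟨-, hβ2⟩ := hindep _ _ e7
      have hβ0 : β = 0 := by
        have e8 : 2 * β = 0 := by linear_combination -hβ2
        rcases mul_eq_zero.mp e8 with hc2 | hc2
        · exact absurd hc2 h2
        · exact hc2
      have hkscalar : ((g*g : GL (Fin 2) K) : Matrix (Fin 2) (Fin 2) K) = α • 1 := by
        rw [hkab, hβ0, zero_smul, add_zero]
      have hcent : g*g ∈ Subgroup.center (GL (Fin 2) K) :=
        scalar_mem_center (g*g) α hkscalar
      have hpow : (QuotientGroup.mk (s := Subgroup.center (GL (Fin 2) K)) g)^2 = 1 := by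
        rw [← QuotientGroup.mk_pow]
        exact (QuotientGroup.eq_one_iff _).mpr (by rw [pow_two]; exact hcent)
      have hord2 : orderOf (QuotientGroup.mk (s := Subgroup.center (GL (Fin 2) K)) g) ≤ 2 :=
        Nat.le_of_dvd (by norm_num) (orderOf_dvd_of_pow_eq_one hpow)
      omega
  -- now g ∈ unitsOf R
  have hgU : g ∈ unitsOf R.toSubring := mem_unitsOf R g hgvR
  have hgivR : ((g⁻¹ : GL (Fin 2) K) : Matrix (Fin 2) (Fin 2) K) ∈ R := hgU.2
  have hgns : ∀ c : K, (g : Matrix (Fin 2) (Fin 2) K) ≠ c • 1 := by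
    intro c hc
    have hcent : g ∈ Subgroup.center (GL (Fin 2) K) := scalar_mem_center g c hc
    have h1 : (QuotientGroup.mk (s := Subgroup.center (GL (Fin 2) K)) g) = 1 :=
      (QuotientGroup.eq_one_iff g).mpr hcent
    rw [h1, orderOf_one] at hgord
    omega
  have hδg := delta_ne h2 R hetale _ hgvR hgns
  -- kernel of conjSub g is R
  have hker : LinearMap.ker (conjSub g) = Subalgebra.toSubmodule R := by
    ext B
    simp only [LinearMap.mem_ker, conjSub_apply, Subalgebra.mem_toSubmodule]
    constructor
    · intro hB
      obtain ⟨a, b, hab⟩ := comm_mem_span _ B hδg (commute_of_conj_eq g B (sub_eq_zero.mp hB))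
      rw [hab]
      exact R.add_mem (R.smul_mem R.one_mem _) (R.smul_mem hgvR _)
    · intro hB
      rw [conj_eq_of_commute g B (hcomm _ hgvR B hB), sub_self]
  have hrk : Module.finrank K (LinearMap.range (conjSub g)) = 2 := by
    have h1 := LinearMap.finrank_range_add_finrank_ker (conjSub g)
    rw [hker] at h1
    have h2' : Module.finrank K (Subalgebra.toSubmodule R) = 2 := hrank
    have h3 : Module.finrank K (Matrix (Fin 2) (Fin 2) K) = 4 := by
      simp [Module.finrank_matrix]
    omega
  set V := Submodule.span K
      {X : Matrix (Fin 2) (Fin 2) K | ∃ g ∈ G,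
        ∃ B : Matrix (Fin 2) (Fin 2) K,
          X = ((g : GL (Fin 2) K) : Matrix (Fin 2) (Fin 2) K) * B *
              ((g⁻¹ : GL (Fin 2) K) : Matrix (Fin 2) (Fin 2) K) - B} with hV
  have hWV : LinearMap.range (conjSub g) ≤ V := by
    rintro X ⟨B, rfl⟩
    exact Submodule.subset_span ⟨g, hgG, B, rfl⟩
  have hyV : y ∈ V := Submodule.subset_span ⟨h, hhG, r, hydef⟩
  have hyW : y ∉ LinearMap.range (conjSub g) := by
    rintro ⟨B, hB⟩
    rw [conjSub_apply] at hB
    have e0 : ((g⁻¹ : GL (Fin 2) K) : Matrix (Fin 2) (Fin 2) K) * y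
        = y * ((g⁻¹ : GL (Fin 2) K) : Matrix (Fin 2) (Fin 2) K) := hcomm _ hgivR y hyR
    have e : ((g⁻¹ : GL (Fin 2) K) : Matrix (Fin 2) (Fin 2) K) * (y * (g : Matrix (Fin 2) (Fin 2) K)) = y := by
      rw [← mul_assoc, e0, mul_assoc, val_inv_mul, mul_one]
    have htr1 : Matrix.trace ((g : Matrix (Fin 2) (Fin 2) K) * B *
        ((g⁻¹ : GL (Fin 2) K) : Matrix (Fin 2) (Fin 2) K) * y) = Matrix.trace (B * y) := by
      have hh1 : (g : Matrix (Fin 2) (Fin 2) K) * B *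
          ((g⁻¹ : GL (Fin 2) K) : Matrix (Fin 2) (Fin 2) K) * y
          = (g : Matrix (Fin 2) (Fin 2) K) * (B * (((g⁻¹ : GL (Fin 2) K) : Matrix (Fin 2) (Fin 2) K) * y)) := by
        simp only [mul_assoc]
      rw [hh1, Matrix.trace_mul_comm]
      congr 1
      simp only [mul_assoc]
      rw [e]
    have htr : Matrix.trace (y * y) = 0 := by
      have e9 : y * y = ((g : Matrix (Fin 2) (Fin 2) K) * B *
          ((g⁻¹ : GL (Fin 2) K) : Matrix (Fin 2) (Fin 2) K)) * y - B * y := by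
        rw [← sub_mul, hB]
      rw [e9, Matrix.trace_sub, htr1, sub_self]
    have hyy : y * y = (- y.det) • 1 := by
      rw [ch2 y, hytr, zero_smul, zero_sub, neg_smul]
    have htr2 : Matrix.trace (y * y) = -(y.det * 2) := by
      rw [hyy, Matrix.trace_smul, Matrix.trace_one, smul_eq_mul, Fintype.card_fin]
      push_cast
      ring
    have hdet0 : y.det = 0 := by
      rw [htr] at htr2
      have e8 : 2 * y.det = 0 := by linear_combination htr2
      rcases mul_eq_zero.mp e8 with hc2 | hc2
      · exact absurd hc2 h2
      · exact hc2
    exact hyne (hetale y hyR (by rw [hyy, hdet0, neg_zero, zero_smul]))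
  have hlt : LinearMap.range (conjSub g) <
      LinearMap.range (conjSub g) ⊔ Submodule.span K {y} := by
    refine lt_of_le_of_ne le_sup_left ?_
    intro hEq
    exact hyW (hEq ▸ (le_sup_right (a := LinearMap.range (conjSub g))
      (Submodule.mem_span_singleton_self y)))
  have h3le : 3 ≤ Module.finrank K V := by
    have hfin := Submodule.finrank_lt_finrank_of_lt hlt
    have hsupV : LinearMap.range (conjSub g) ⊔ Submodule.span K {y} ≤ V :=
      sup_le hWV ((Submodule.span_singleton_le_iff_mem y V).mpr hyV)
    have := Submodule.finrank_mono hsupV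
    omega
  have hVker : V ≤ LinearMap.ker (Matrix.traceLinearMap (Fin 2) K K) := by
    rw [hV]
    apply Submodule.span_le.mpr
    rintro X ⟨g', hg', B, rfl⟩
    simp only [SetLike.mem_coe, LinearMap.mem_ker, Matrix.traceLinearMap_apply]
    rw [Matrix.trace_sub, conj_trace, sub_self]
  have hker3 : Module.finrank K (LinearMap.ker (Matrix.traceLinearMap (Fin 2) K K)) = 3 := by
    have h1 := LinearMap.finrank_range_add_finrank_ker (Matrix.traceLinearMap (Fin 2) K K)
    have h3 : Module.finrank K (Matrix (Fin 2) (Fin 2) K) = 4 := by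
      simp [Module.finrank_matrix]
    have hrange : Module.finrank K (LinearMap.range (Matrix.traceLinearMap (Fin 2) K K)) = 1 := by
      have hsurj : LinearMap.range (Matrix.traceLinearMap (Fin 2) K K) = ⊤ := by
        rw [LinearMap.range_eq_top]
        intro c
        refine ⟨Matrix.diagonal ![c, 0], ?_⟩
        simp [Matrix.traceLinearMap_apply, Matrix.trace_diagonal, Fin.sum_univ_two]
      rw [hsurj]
      rw [finrank_top]
      exact Module.finrank_self K
    omega
  exact Submodule.eq_of_le_of_finrank_le hVker (by rw [hker3]; exact h3le)

end Aux

/-- Let `ℓ` be an odd prime, `C(ℓ)` a Cartan subgroup of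
`GL₂(F_ℓ)` (unit group of a 2-dimensional commutative étale (= reduced)
`F_ℓ`-subalgebra of `M₂(F_ℓ)`), and `G` a subgroup of its normalizer `C⁺(ℓ)`
that is not contained in any Cartan subgroup and whose image in `PGL₂(F_ℓ)`
contains an element of order at least 5.  Then the `F_ℓ`-span of
`{gBg⁻¹ − B : g ∈ G, B ∈ gl₂(F_ℓ)}` equals `sl₂(F_ℓ)`. -/
theorem stmt16 (ℓ : ℕ) [Fact (Nat.Prime ℓ)] (hodd : 2 < ℓ)
    (R : Subalgebra (ZMod ℓ) (Matrix (Fin 2) (Fin 2) (ZMod ℓ)))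
    (hcomm : ∀ x ∈ R, ∀ y ∈ R, x * y = y * x)
    (hrank : Module.finrank (ZMod ℓ) R = 2)
    (hetale : ∀ x ∈ R, x * x = 0 → x = 0)
    (G : Subgroup (GL (Fin 2) (ZMod ℓ)))
    (hGnorm : G ≤ Subgroup.normalizer ((unitsOf R.toSubring : Subgroup (GL (Fin 2) (ZMod ℓ))) : Set (GL (Fin 2) (ZMod ℓ))))
    (hGnotC : ∀ R' : Subalgebra (ZMod ℓ) (Matrix (Fin 2) (Fin 2) (ZMod ℓ)),
      (∀ x ∈ R', ∀ y ∈ R', x * y = y * x) →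
      Module.finrank (ZMod ℓ) R' = 2 →
      (∀ x ∈ R', x * x = 0 → x = 0) →
      ¬ G ≤ unitsOf R'.toSubring)
    (hord : ∃ g ∈ G, 5 ≤ orderOf
      (QuotientGroup.mk (s := Subgroup.center (GL (Fin 2) (ZMod ℓ))) g)) :
    Submodule.span (ZMod ℓ)
        {X : Matrix (Fin 2) (Fin 2) (ZMod ℓ) | ∃ g ∈ G,
          ∃ B : Matrix (Fin 2) (Fin 2) (ZMod ℓ),
            X = ((g : GL (Fin 2) (ZMod ℓ)) : Matrix (Fin 2) (Fin 2) (ZMod ℓ)) * B *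
                ((g⁻¹ : GL (Fin 2) (ZMod ℓ)) : Matrix (Fin 2) (Fin 2) (ZMod ℓ)) - B}
      = LinearMap.ker (Matrix.traceLinearMap (Fin 2) (ZMod ℓ) (ZMod ℓ)) := by
  have hp : ℓ.Prime := Fact.out
  haveI : NeZero ℓ := ⟨hp.ne_zero⟩
  have h2 : (2 : ZMod ℓ) ≠ 0 := by
    intro h
    have hd : ℓ ∣ 2 :=
      (ZMod.natCast_eq_zero_iff 2 ℓ).mp (by exact_mod_cast h)
    have := Nat.le_of_dvd (by norm_num) hd
    omega
  exact aux_main h2 R hcomm hrank hetale G hGnorm (hGnotC R hcomm hrank hetale) hord
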